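/- Under the standing setup, suppose T_g is not a t-intersecting family, |T_f| = 1, and the unique member of T_f does not belong to T_g. Then |T_g| ≤ 2(ℓ−t+1). -/

import Mathlib

/-
Let `X` be the unique `t`-cover of size `t+1` of `F` and pick `B ∈ G` with `|X ∩ B| < t`.
Any `(t+1)`-set `Y` that `t`-covers `G` extends to a `k`-set meeting `X` only inside `Y`;
by maximality that set lies in `F`, so `|X ∩ Y| ≥ t`. Hence `Y` arises from `X` by exchanging
one element, and since `|Y ∩ B| ≥ t > |X ∩ B|` the exchange must remove a point of `X \ B` and
add a point of `B \ X`, which also forces `|X ∩ B| = t - 1`. There are at most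
`|X \ B| · |B \ X| = 2 (ℓ - t + 1)` such exchanges.
-/

/-- The interval `[a,b] = {a, a+1, …, b}` as a finset of naturals. -/
def Iv (a b : ℕ) : Finset ℕ := Finset.Icc a b

/-- `ksubsets S k` is the family of all `k`-element subsets of `S`. -/
def ksubsets (S : Finset ℕ) (k : ℕ) : Finset (Finset ℕ) :=
  S.powerset.filter (fun F => F.card = k)

/-- Families `F` and `G` are cross `t`-intersecting. -/
def crossInt (t : ℕ) (F G : Finset (Finset ℕ)) : Prop :=
  ∀ A ∈ F, ∀ B ∈ G, t ≤ (A ∩ B).card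

/-- The `t`-covering number of a family of subsets of `[n]`. -/
noncomputable def tau (n t : ℕ) (F : Finset (Finset ℕ)) : ℕ :=
  sInf {c : ℕ | ∃ T : Finset ℕ, T ⊆ Finset.Icc 1 n ∧ T.card = c ∧ ∀ A ∈ F, t ≤ (T ∩ A).card}

/-- The collection of all `t`-covers of `F` of size `t+1`. -/
def covers (n t : ℕ) (F : Finset (Finset ℕ)) : Finset (Finset ℕ) :=
  (Finset.Icc 1 n).powerset.filter (fun T => T.card = t + 1 ∧ ∀ A ∈ F, t ≤ (T ∩ A).card)

/-- `F ⊆ ksubsets S k` and `G ⊆ ksubsets S l` form a maximal cross `t`-intersecting pair. -/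
def maximalCrossIn (S : Finset ℕ) (k l t : ℕ) (F G : Finset (Finset ℕ)) : Prop :=
  F ⊆ ksubsets S k ∧ G ⊆ ksubsets S l ∧ crossInt t F G ∧
  ∀ F' G' : Finset (Finset ℕ), F' ⊆ ksubsets S k → G' ⊆ ksubsets S l →
    crossInt t F' G' → F ⊆ F' → G ⊆ G' → F = F' ∧ G = G'

/-- Elementwise image of a family under a permutation. -/
def mapFam (σ : Equiv.Perm ℕ) (F : Finset (Finset ℕ)) : Finset (Finset ℕ) :=
  F.image (fun A => A.image σ)

/-- `σ` is a permutation of `[n]` (maps `[n]` into, hence onto, itself). -/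
def permOn (n : ℕ) (σ : Equiv.Perm ℕ) : Prop := ∀ x ∈ Finset.Icc 1 n, σ x ∈ Finset.Icc 1 n

/-- The pairs `(F, G)` and `(F', G')` are isomorphic via a permutation of `[n]`. -/
def isoPair (n : ℕ) (F G F' G' : Finset (Finset ℕ)) : Prop :=
  ∃ σ : Equiv.Perm ℕ, permOn n σ ∧ mapFam σ F = F' ∧ mapFam σ G = G'

/-- `F` and `F'` are isomorphic via a permutation of `[n]`. -/
def isoFam (n : ℕ) (F F' : Finset (Finset ℕ)) : Prop :=
  ∃ σ : Equiv.Perm ℕ, permOn n σ ∧ mapFam σ F = F'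

/-- Construction `𝒜(k,t) = {F ∈ C([n],k) : |F ∩ [t+2]| ≥ t+1}`. -/
def famA (n k t : ℕ) : Finset (Finset ℕ) :=
  (ksubsets (Iv 1 n) k).filter (fun F => t + 1 ≤ (F ∩ Iv 1 (t+2)).card)

/-- Construction `𝒞₁(ℓ,t) = {[ℓ+1]\{i} : i ∈ [t+1]} ∪ {G ∈ C([n],ℓ) : [t+1] ⊆ G}`. -/
def famC1 (n l t : ℕ) : Finset (Finset ℕ) :=
  (Iv 1 (t+1)).image (fun i => (Iv 1 (l+1)).erase i) ∪
  (ksubsets (Iv 1 n) l).filter (fun G => Iv 1 (t+1) ⊆ G)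

/-- Construction `𝒞₂(k,t;ℓ)`. -/
def famC2 (n k t l : ℕ) : Finset (Finset ℕ) :=
  (ksubsets (Iv 1 n) k).filter
    (fun F => (F ∩ Iv 1 (t+1)).card = t ∧ 1 ≤ (F ∩ Iv (t+2) (l+1)).card) ∪
  (ksubsets (Iv 1 n) k).filter (fun F => Iv 1 (t+1) ⊆ F)

/-- Construction `ℋ(k,t;X,Y) = {F ∈ C([n],k) : [t] ⊆ F, |F∩Y| ≥ 1} ∪ {(X∪[t])\{i} : i ∈ [t]}`. -/
def famH (n k t : ℕ) (X Y : Finset ℕ) : Finset (Finset ℕ) :=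
  (ksubsets (Iv 1 n) k).filter (fun F => Iv 1 t ⊆ F ∧ 1 ≤ (F ∩ Y).card) ∪
  (Iv 1 t).image (fun i => (X ∪ Iv 1 t).erase i)

/-- Construction `ℬ(k;(a₁,a₂,a₃,a₄))`. -/
def famB (n k a1 a2 a3 a4 : ℕ) : Finset (Finset ℕ) :=
  (ksubsets (Iv 1 n) k).filter
    (fun F => ({a1, a2} : Finset ℕ) ⊆ F ∨ ({a2, a3} : Finset ℕ) ⊆ F ∨ ({a3, a4} : Finset ℕ) ⊆ F)

/-- Binomial coefficient `C(a,b)` for integers, `0` if `b < 0` or `b > a`. -/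
def ch (a b : ℤ) : ℤ := if 0 ≤ b ∧ b ≤ a then (Nat.choose a.toNat b.toNat : ℤ) else 0

/-- `g(m,x,y,t) = m·C(n−t−1,x−t−1) + y(t+1)(y−t+1)·C(n−t−2,x−t−2)`. -/
def gfun (n m x y t : ℤ) : ℤ :=
  m * ch (n - t - 1) (x - t - 1) + y * (t + 1) * (y - t + 1) * ch (n - t - 2) (x - t - 2)

/-- `a(x,t) = (t+2)·C(n−t−2,x−t−1) + C(n−t−2,x−t−2)`. -/
def afun (n x t : ℤ) : ℤ := (t + 2) * ch (n - t - 2) (x - t - 1) + ch (n - t - 2) (x - t - 2)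

/-- `c₁(y,t) = C(n−t−1,y−t−1) + t + 1`. -/
def c1fun (n y t : ℤ) : ℤ := ch (n - t - 1) (y - t - 1) + t + 1

/-- `c₂(x,y,t) = (t+1)(C(n−t−1,x−t) − C(n−y−1,x−t)) + C(n−t−1,x−t−1)`. -/
def c2fun (n x y t : ℤ) : ℤ :=
  (t + 1) * (ch (n - t - 1) (x - t) - ch (n - y - 1) (x - t)) + ch (n - t - 1) (x - t - 1)

/-- `h(x,y,t) = C(n−t,x−t) − C(n−y−1,x−t) + t`. -/
def hfun (n x y t : ℤ) : ℤ := ch (n - t) (x - t) - ch (n - y - 1) (x - t) + t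

open Finset

namespace Finset

variable {α : Type*} [DecidableEq α]

theorem exists_eq_insert_erase_of_card_le_card_inter_add_one {X Y : Finset α}
    (hcard : #X = #Y) (hinter : #X ≤ #(X ∩ Y) + 1) (hne : X ≠ Y) :
    ∃ x ∈ X, ∃ y ∉ X, Y = insert y (X.erase x) := by
  have hlt : #(X ∩ Y) < #X := by
    refine card_lt_card (inter_subset_left.ssubset_of_ne fun h => hne ?_)
    exact eq_of_subset_of_card_le (inter_eq_left.1 h) hcard.ge
  obtain ⟨x, hxI, hxX⟩ :=
    exists_eq_insert_iff.2 (⟨inter_subset_left, by omega⟩ : X ∩ Y ⊆ X ∧ #(X ∩ Y) + 1 = #X)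
  obtain ⟨y, hyI, hyY⟩ :=
    exists_eq_insert_iff.2 (⟨inter_subset_right, by omega⟩ : X ∩ Y ⊆ Y ∧ #(X ∩ Y) + 1 = #Y)
  refine ⟨x, hxX ▸ mem_insert_self x _, y, fun hyX => hyI (mem_inter.2 ⟨hyX, ?_⟩), ?_⟩
  · exact hyY ▸ mem_insert_self y _
  · rw [← hxX, erase_insert hxI, hyY]

theorem card_insert_erase_inter_add_le {X B : Finset α} {x : α} (y : α) (hx : x ∈ X) :
    #(insert y (X.erase x) ∩ B) + (if x ∈ B then 1 else 0) ≤
      #(X ∩ B) + (if y ∈ B then 1 else 0) := by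
  have herase : #(X.erase x ∩ B) + (if x ∈ B then 1 else 0) = #(X ∩ B) := by
    rw [erase_inter]
    split_ifs with hxB
    · exact card_erase_add_one (mem_inter.2 ⟨hx, hxB⟩)
    · rw [erase_eq_of_notMem fun h => hxB (mem_inter.1 h).2, add_zero]
  have hinsert : #(insert y (X.erase x) ∩ B) ≤ #(X.erase x ∩ B) + (if y ∈ B then 1 else 0) := by
    split_ifs with hyB
    · rw [insert_inter_of_mem hyB]
      exact card_insert_le _ _
    · rw [insert_inter_of_notMem hyB, add_zero]
  omega

theorem notMem_and_mem_of_card_inter_lt_le {X B : Finset α} {x y : α} {t : ℕ} (hx : x ∈ X)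
    (hX : #(X ∩ B) < t) (hY : t ≤ #(insert y (X.erase x) ∩ B)) :
    x ∉ B ∧ y ∈ B ∧ t = #(X ∩ B) + 1 := by
  have := card_insert_erase_inter_add_le (B := B) y hx
  split_ifs at this with hxB hyB hyB <;> first | omega | exact ⟨hxB, hyB, by omega⟩

theorem card_le_card_sdiff_mul_of_forall_eq_insert_erase {𝒯 : Finset (Finset α)}
    {X B : Finset α} (h𝒯 : ∀ Y ∈ 𝒯, ∃ x ∈ X \ B, ∃ y ∈ B \ X, Y = insert y (X.erase x)) :
    #𝒯 ≤ #(X \ B) * #(B \ X) :=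
  calc #𝒯 ≤ #(((X \ B) ×ˢ (B \ X)).image fun p => insert p.2 (X.erase p.1)) := by
        refine card_le_card fun Y hY => ?_
        obtain ⟨x, hx, y, hy, rfl⟩ := h𝒯 Y hY
        exact mem_image.2 ⟨(x, y), mem_product.2 ⟨hx, hy⟩, rfl⟩
    _ ≤ #(X \ B) * #(B \ X) := card_image_le.trans (card_product _ _).le

theorem card_le_of_forall_eq_insert_erase_of_card_inter_lt_le {𝒯 : Finset (Finset α)}
    {X B : Finset α} {t : ℕ} (h𝒯 : ∀ Y ∈ 𝒯, ∃ x ∈ X, ∃ y ∉ X, Y = insert y (X.erase x))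
    (hX : #(X ∩ B) < t) (hB : ∀ Y ∈ 𝒯, t ≤ #(Y ∩ B)) :
    #𝒯 ≤ (#X + 1 - t) * (#B + 1 - t) := by
  rcases 𝒯.eq_empty_or_nonempty with rfl | ⟨Y, hY⟩
  · simp
  have hXB : t = #(X ∩ B) + 1 := by
    obtain ⟨x, hx, y, -, rfl⟩ := h𝒯 Y hY
    exact (notMem_and_mem_of_card_inter_lt_le hx hX (hB _ hY)).2.2
  have hBt : t ≤ #B := (hB Y hY).trans (card_le_card inter_subset_right)
  calc #𝒯 ≤ #(X \ B) * #(B \ X) := by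
        refine card_le_card_sdiff_mul_of_forall_eq_insert_erase fun Y hY => ?_
        obtain ⟨x, hx, y, hyX, rfl⟩ := h𝒯 Y hY
        obtain ⟨hxB, hyB, -⟩ := notMem_and_mem_of_card_inter_lt_le hx hX (hB _ hY)
        exact ⟨x, mem_sdiff.2 ⟨hx, hxB⟩, y, mem_sdiff.2 ⟨hyB, hyX⟩, rfl⟩
    _ = (#X + 1 - t) * (#B + 1 - t) := by
        rw [card_sdiff, card_sdiff, inter_comm B X]
        congr 1 <;> omega

end Finset

theorem add_add_one_le_of_standing_bound {n k l t : ℕ} (hk : t + 1 ≤ k)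
    (hn : (t+1)^2 * (k+l)^2 * (k - t + 1) * (l - t + 1) + k + l - t ≤ n) : k + (t + 1) ≤ n := by
  have : 2 * t + 1 ≤ (t+1)^2 * (k+l)^2 * (k - t + 1) * (l - t + 1) :=
    calc 2 * t + 1 ≤ (t + 1) ^ 2 := by nlinarith
      _ ≤ (t + 1) ^ 2 * (k + l) ^ 2 := Nat.le_mul_of_pos_right _ (pow_pos (by omega) 2)
      _ ≤ _ := (Nat.le_mul_of_pos_right _ (by omega)).trans (Nat.le_mul_of_pos_right _ (by omega))
  omega

theorem mem_covers {n t : ℕ} {F : Finset (Finset ℕ)} {T : Finset ℕ} :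
    T ∈ covers n t F ↔ T ⊆ Icc 1 n ∧ #T = t + 1 ∧ ∀ A ∈ F, t ≤ #(T ∩ A) := by
  simp [covers]

namespace maximalCrossIn

variable {k l t : ℕ} {F G : Finset (Finset ℕ)}

theorem mem_left {S : Finset ℕ} (hmax : maximalCrossIn S k l t F G) {A : Finset ℕ}
    (hA : A ∈ ksubsets S k) (hAG : ∀ B ∈ G, t ≤ #(A ∩ B)) : A ∈ F := by
  obtain ⟨hF, hG, hFG, hmaximal⟩ := hmax
  have hcross : crossInt t (insert A F) G := by
    intro A' hA' B hB
    rcases mem_insert.1 hA' with rfl | hA'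
    exacts [hAG B hB, hFG A' hA' B hB]
  rw [(hmaximal _ G (insert_subset hA hF) hG hcross (subset_insert A F) subset_rfl).1]
  exact mem_insert_self A F

theorem le_card_inter_of_covers {S : Finset ℕ} (hmax : maximalCrossIn S k l t F G)
    {T X : Finset ℕ} (hTS : T ⊆ S) (hTk : #T ≤ k) (hXS : k + #X ≤ #S)
    (hTG : ∀ B ∈ G, t ≤ #(T ∩ B)) (hXF : ∀ A ∈ F, t ≤ #(X ∩ A)) : t ≤ #(X ∩ T) := by
  have hroom : k ≤ #(T ∪ (S \ X)) :=
    calc k ≤ #S - #X := by omega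
      _ ≤ #(S \ X) := le_card_sdiff X S
      _ ≤ #(T ∪ (S \ X)) := card_le_card subset_union_right
  obtain ⟨A, hTA, hAsub, hAk⟩ := exists_subsuperset_card_eq subset_union_left hTk hroom
  have hAS : A ⊆ S := hAsub.trans (union_subset hTS sdiff_subset)
  have hAF : A ∈ F :=
    hmax.mem_left (mem_filter.2 ⟨mem_powerset.2 hAS, hAk⟩) fun B hB =>
      (hTG B hB).trans (card_le_card (inter_subset_inter_right hTA))
  refine (hXF A hAF).trans (card_le_card fun a ha => ?_)
  obtain ⟨haX, haA⟩ := mem_inter.1 ha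
  rcases mem_union.1 (hAsub haA) with haT | haS
  · exact mem_inter.2 ⟨haX, haT⟩
  · exact absurd haX (mem_sdiff.1 haS).2

theorem exists_eq_insert_erase_of_mem_covers {n : ℕ} (hmax : maximalCrossIn (Iv 1 n) k l t F G)
    (hk : t + 1 ≤ k) (hn : k + (t + 1) ≤ n) {X Y : Finset ℕ} (hX : X ∈ covers n t F)
    (hY : Y ∈ covers n t G) (hXY : X ≠ Y) : ∃ x ∈ X, ∃ y ∉ X, Y = insert y (X.erase x) := by
  obtain ⟨-, hXcard, hXF⟩ := mem_covers.1 hX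
  obtain ⟨hYsub, hYcard, hYG⟩ := mem_covers.1 hY
  have hXS : k + #X ≤ #(Iv 1 n) := by simp only [Iv, Nat.card_Icc, hXcard]; omega
  have hinter := hmax.le_card_inter_of_covers hYsub (by omega) hXS hYG hXF
  exact exists_eq_insert_erase_of_card_le_card_inter_add_one (hXcard.trans hYcard.symm)
    (by omega) hXY

end maximalCrossIn

theorem single_cover_not_contained_general
    (n k l t : ℕ) (hk : t + 1 ≤ k)
    (hn : (t+1)^2 * (k+l)^2 * (k - t + 1) * (l - t + 1) + k + l - t ≤ n)
    (F G : Finset (Finset ℕ))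
    (hmax : maximalCrossIn (Iv 1 n) k l t F G)
    (hTf : (covers n t F).card = 1)
    (hnotin : ∀ A ∈ covers n t F, A ∉ covers n t G) :
    (covers n t G).card ≤ 2 * (l - t + 1) := by
  obtain ⟨X, hX⟩ := card_eq_one.1 hTf
  have hXF : X ∈ covers n t F := hX ▸ mem_singleton_self X
  obtain ⟨hXsub, hXcard, -⟩ := mem_covers.1 hXF
  obtain ⟨B, hBG, hXB⟩ : ∃ B ∈ G, #(X ∩ B) < t := by
    simpa [mem_covers, hXsub, hXcard] using hnotin X hXF
  have hBcard : #B = l := (mem_filter.1 (hmax.2.1 hBG)).2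
  have hexchange : ∀ Y ∈ covers n t G, ∃ x ∈ X, ∃ y ∉ X, Y = insert y (X.erase x) :=
    fun Y hY => hmax.exists_eq_insert_erase_of_mem_covers hk
      (add_add_one_le_of_standing_bound hk hn) hXF hY fun h => hnotin X hXF (h ▸ hY)
  calc #(covers n t G) ≤ (#X + 1 - t) * (#B + 1 - t) :=
        card_le_of_forall_eq_insert_erase_of_card_inter_lt_le hexchange hXB
          fun Y hY => (mem_covers.1 hY).2.2 B hBG
    _ ≤ 2 * (l - t + 1) := by
        rw [hXcard, hBcard]
        exact Nat.mul_le_mul (by omega) (by omega)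

/-- Lemma 2.6(i). -/
theorem single_cover_not_contained
    (n k l t : ℕ) (hn0 : 0 < n) (ht0 : 0 < t) (hk : t + 1 ≤ k) (hl : t + 1 ≤ l)
    (hn : (t+1)^2 * (k+l)^2 * (k - t + 1) * (l - t + 1) + k + l - t ≤ n)
    (F G : Finset (Finset ℕ))
    (hmax : maximalCrossIn (Iv 1 n) k l t F G)
    (htF : tau n t F = t + 1) (htG : tau n t G = t + 1)
    (hTg : ¬ crossInt t (covers n t G) (covers n t G))
    (hTf : (covers n t F).card = 1)
    (hnotin : ∀ A ∈ covers n t F, A ∉ covers n t G) :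
    (covers n t G).card ≤ 2 * (l - t + 1) :=
  single_cover_not_contained_general n k l t hk hn F G hmax hTf hnotin
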